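/- (Korovkin-type convergence) For every continuous f : [0,1] → ℝ, fixed 0 ≤ α ≤ 1 and ρ > 0, the generalized Bernstein–Durrmeyer operators converge uniformly: G_{n,ρ}^{(α)}(f; ·) → f uniformly on [0,1] as n → ∞. -/

import Mathlib

/-!
The operators `G n α ρ` are positive and linear on `C[0,1]`, so by the Bohman–Korovkin theorem it is
enough to check the test functions `1`, `t`, `t²`. For a positive linear `L` and a continuous `f`,
uniform continuity gives `|f t - f x| ≤ η + C (t - x)²`; applying `L` in `t` bounds `|L f x - f x|`
by `η` plus a multiple of the errors of `L` on the three test functions.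

For `G`, the Beta density `μ_{n,ρ,k}` has moments `1`, `(kρ+1)/(nρ+2)` and
`(kρ+1)(kρ+2)/((nρ+2)(nρ+3))`, quadratic in `k`, while `p_{n,k}^{(α)}` splits into classical
Bernstein bases of degrees `n - 2` and `n`, whose moments of order at most two are known. So
`G(t;x)` and `G(t²;x)` are explicit, and they are within `O(1/n)` of `x` and `x²` on `[0,1]`.
-/

open MeasureTheory Filter Finset Real

/-- Generalized Bernstein basis function `p_{n,k}^{(α)}(x)` (polynomial form). -/
noncomputable def bernP (n k : ℕ) (α x : ℝ) : ℝ :=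
  ((n - 2).choose k : ℝ) * (1 - α) * x ^ k * (1 - x) ^ (n - k - 1)
    + (if 2 ≤ k then (((n - 2).choose (k - 2)) : ℝ) else 0) * (1 - α) * x ^ (k - 1) * (1 - x) ^ (n - k)
    + (n.choose k : ℝ) * α * x ^ k * (1 - x) ^ (n - k)

/-- Euler Beta function. -/
noncomputable def betaR (e f : ℝ) : ℝ := Real.Gamma e * Real.Gamma f / Real.Gamma (e + f)

/-- The Beta density `μ_{n,ρ,k}`. -/
noncomputable def muD (n k : ℕ) (ρ t : ℝ) : ℝ :=
  t ^ ((k : ℝ) * ρ) * (1 - t) ^ (((n : ℝ) - (k : ℝ)) * ρ) /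
    betaR ((k : ℝ) * ρ + 1) (((n : ℝ) - (k : ℝ)) * ρ + 1)

/-- The generalized Bernstein–Durrmeyer operator. -/
noncomputable def G (n : ℕ) (α ρ : ℝ) (f : ℝ → ℝ) (x : ℝ) : ℝ :=
  ∑ k ∈ Finset.range (n + 1), bernP n k α x * ∫ t in (0:ℝ)..1, muD n k ρ t * f t

open Topology

lemma integral_rpow_mul_one_sub_rpow {a b : ℝ} (ha : 0 < a) (hb : 0 < b) :
    ∫ t in (0:ℝ)..1, t ^ (a - 1) * (1 - t) ^ (b - 1) = betaR a b := by
  have hB : Complex.betaIntegral a b = ↑(∫ t in (0:ℝ)..1, t ^ (a - 1) * (1 - t) ^ (b - 1)) := by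
    rw [Complex.betaIntegral, ← intervalIntegral.integral_ofReal]
    refine intervalIntegral.integral_congr fun t ht => ?_
    rw [Set.uIcc_of_le zero_le_one] at ht
    push_cast
    rw [Complex.ofReal_cpow ht.1, Complex.ofReal_cpow (sub_nonneg.2 ht.2)]
    push_cast
    ring_nf
  rw [show betaR a b = ProbabilityTheory.beta a b from rfl,
    ProbabilityTheory.beta_eq_betaIntegralReal a b ha hb, hB, Complex.ofReal_re]

lemma betaR_add_one_left {a b : ℝ} (ha : a ≠ 0) (hab : a + b ≠ 0) :
    betaR (a + 1) b = a / (a + b) * betaR a b := by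
  rw [betaR, betaR, Real.Gamma_add_one ha, add_right_comm, Real.Gamma_add_one hab]
  simp only [div_eq_mul_inv, mul_inv]
  ring

lemma betaR_pos {a b : ℝ} (ha : 0 < a) (hb : 0 < b) : 0 < betaR a b :=
  ProbabilityTheory.beta_pos ha hb

noncomputable def betaDensity (a b t : ℝ) : ℝ := t ^ a * (1 - t) ^ b / betaR (a + 1) (b + 1)

section BetaDensity

variable {a b : ℝ}

lemma betaDensity_nonneg (ha : -1 < a) (hb : -1 < b) {t : ℝ} (ht : t ∈ Set.Icc (0:ℝ) 1) :
    0 ≤ betaDensity a b t :=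
  div_nonneg (mul_nonneg (Real.rpow_nonneg ht.1 _) (Real.rpow_nonneg (sub_nonneg.2 ht.2) _))
    (betaR_pos (by linarith) (by linarith)).le

lemma continuousOn_betaDensity (ha : 0 ≤ a) (hb : 0 ≤ b) :
    ContinuousOn (betaDensity a b) (Set.Icc 0 1) := by
  unfold betaDensity
  fun_prop (disch := assumption)

lemma integral_betaDensity_mul_pow (ha : -1 < a) (hb : -1 < b) (j : ℕ) :
    ∫ t in (0:ℝ)..1, betaDensity a b t * t ^ j
      = betaR (a + j + 1) (b + 1) / betaR (a + 1) (b + 1) := by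
  have hint : ∀ᵐ t, t ∈ Set.uIoc (0:ℝ) 1 → betaDensity a b t * t ^ j
      = t ^ (a + j + 1 - 1) * (1 - t) ^ (b + 1 - 1) / betaR (a + 1) (b + 1) := by
    refine Filter.Eventually.of_forall fun t ht => ?_
    rw [Set.uIoc_of_le zero_le_one] at ht
    rw [add_sub_cancel_right, add_sub_cancel_right, Real.rpow_add_natCast ht.1.ne', betaDensity]
    ring
  rw [intervalIntegral.integral_congr_ae hint, intervalIntegral.integral_div,
    integral_rpow_mul_one_sub_rpow (by linarith [j.cast_nonneg (α := ℝ)]) (by linarith)]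

lemma integral_betaDensity (ha : -1 < a) (hb : -1 < b) :
    ∫ t in (0:ℝ)..1, betaDensity a b t = 1 := by
  simpa [div_self (betaR_pos (by linarith : 0 < a + 1) (by linarith : 0 < b + 1)).ne'] using
    integral_betaDensity_mul_pow ha hb 0

lemma integral_betaDensity_mul_id (ha : -1 < a) (hb : -1 < b) :
    ∫ t in (0:ℝ)..1, betaDensity a b t * t = (a + 1) / (a + b + 2) := by
  have hB := betaR_pos (by linarith : 0 < a + 1) (by linarith : 0 < b + 1)
  have h := integral_betaDensity_mul_pow ha hb 1
  simp only [pow_one, Nat.cast_one] at h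
  rw [h, betaR_add_one_left (by linarith) (by linarith)]
  field_simp
  ring

lemma integral_betaDensity_mul_sq (ha : -1 < a) (hb : -1 < b) :
    ∫ t in (0:ℝ)..1, betaDensity a b t * t ^ 2
      = (a + 1) * (a + 2) / ((a + b + 2) * (a + b + 3)) := by
  have hB := betaR_pos (by linarith : 0 < a + 1) (by linarith : 0 < b + 1)
  rw [integral_betaDensity_mul_pow ha hb 2, Nat.cast_two, show a + 2 + 1 = a + 1 + 1 + 1 by ring,
    betaR_add_one_left (by linarith) (by linarith), betaR_add_one_left (by linarith) (by linarith)]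
  field_simp
  ring

end BetaDensity

lemma bernsteinPolynomial_eval (m j : ℕ) (x : ℝ) :
    (bernsteinPolynomial ℝ m j).eval x = m.choose j * x ^ j * (1 - x) ^ (m - j) := by
  simp [bernsteinPolynomial]

lemma sum_quadratic_mul_bernsteinPolynomial_eval (m : ℕ) (p q r x : ℝ) :
    ∑ j ∈ range (m + 1), (p * j ^ 2 + q * j + r) * (bernsteinPolynomial ℝ m j).eval x
      = p * (m * (m - 1) * x ^ 2 + m * x) + q * (m * x) + r := by
  have h0 := congrArg (Polynomial.eval x) (bernsteinPolynomial.sum ℝ m)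
  have h1 := congrArg (Polynomial.eval x) (bernsteinPolynomial.sum_smul ℝ m)
  have h2 := congrArg (Polynomial.eval x) (bernsteinPolynomial.sum_mul_smul ℝ m)
  simp only [Polynomial.eval_finsetSum, nsmul_eq_mul, Polynomial.eval_one, Polynomial.eval_X,
    Polynomial.eval_pow, Polynomial.eval_mul, Polynomial.eval_natCast] at h0 h1 h2
  have hcast : ∀ j : ℕ, ((j * (j - 1) : ℕ) : ℝ) = j * (j - 1) := by
    rintro (_ | j) <;> simp
  simp only [hcast] at h2
  have hsplit : ∀ j : ℕ, (p * j ^ 2 + q * j + r) * (bernsteinPolynomial ℝ m j).eval x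
      = p * (j * (j - 1) * (bernsteinPolynomial ℝ m j).eval x)
        + (p + q) * (j * (bernsteinPolynomial ℝ m j).eval x)
        + r * (bernsteinPolynomial ℝ m j).eval x :=
    fun j => by ring
  simp only [hsplit, sum_add_distrib, ← mul_sum, h0, h1, h2]
  ring

lemma sum_mul_bernP_add_two (w : ℕ → ℝ) (m : ℕ) (α x : ℝ) :
    ∑ k ∈ range (m + 3), w k * bernP (m + 2) k α x
      = (1 - α) * (1 - x) * ∑ j ∈ range (m + 1), w j * (bernsteinPolynomial ℝ m j).eval x
        + (1 - α) * x * ∑ j ∈ range (m + 1), w (j + 2) * (bernsteinPolynomial ℝ m j).eval x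
        + α * ∑ k ∈ range (m + 3), w k * (bernsteinPolynomial ℝ (m + 2) k).eval x := by
  have h1 : ∑ k ∈ range (m + 3), w k * (m.choose k * (1 - α) * x ^ k * (1 - x) ^ (m + 2 - k - 1))
      = (1 - α) * (1 - x) * ∑ j ∈ range (m + 1), w j * (bernsteinPolynomial ℝ m j).eval x := by
    rw [sum_range_succ, sum_range_succ, Nat.choose_eq_zero_of_lt (by omega : m < m + 1),
      Nat.choose_eq_zero_of_lt (by omega : m < m + 2), mul_sum]
    simp only [Nat.cast_zero, zero_mul, mul_zero, add_zero]
    refine sum_congr rfl fun j hj => ?_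
    rw [show m + 2 - j - 1 = m - j + 1 by grind]
    rw [bernsteinPolynomial_eval]
    ring
  have h2 : ∑ k ∈ range (m + 3), w k * ((if 2 ≤ k then (m.choose (k - 2) : ℝ) else 0)
        * (1 - α) * x ^ (k - 1) * (1 - x) ^ (m + 2 - k))
      = (1 - α) * x * ∑ j ∈ range (m + 1), w (j + 2) * (bernsteinPolynomial ℝ m j).eval x := by
    rw [sum_range_succ', sum_range_succ', mul_sum]
    simp only [show ¬2 ≤ 0 + 1 by omega, show ¬2 ≤ 0 by omega, if_false, zero_mul, mul_zero,
      add_zero]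
    refine sum_congr rfl fun j _ => ?_
    rw [if_pos (by omega), show j + 1 + 1 - 2 = j by omega, show j + 1 + 1 - 1 = j + 1 by omega,
      show m + 2 - (j + 1 + 1) = m - j by omega]
    rw [bernsteinPolynomial_eval]
    ring
  have h3 : ∑ k ∈ range (m + 3), w k * ((m + 2).choose k * α * x ^ k * (1 - x) ^ (m + 2 - k))
      = α * ∑ k ∈ range (m + 3), w k * (bernsteinPolynomial ℝ (m + 2) k).eval x := by
    rw [mul_sum]
    refine sum_congr rfl fun k _ => ?_
    rw [bernsteinPolynomial_eval]
    ring
  rw [← h1, ← h2, ← h3, ← sum_add_distrib, ← sum_add_distrib]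
  refine sum_congr rfl fun k _ => ?_
  simp only [bernP, Nat.add_sub_cancel]
  ring

lemma sum_quadratic_mul_bernP {n : ℕ} (hn : 2 ≤ n) (α x p q r : ℝ) :
    ∑ k ∈ range (n + 1), (p * k ^ 2 + q * k + r) * bernP n k α x
      = p * (n * (n - 1) * x ^ 2 + n * x + 2 * (1 - α) * x * (1 - x)) + q * (n * x) + r := by
  obtain ⟨m, rfl⟩ := Nat.exists_eq_add_of_le' hn
  have hshift : ∑ j ∈ range (m + 1),
      (p * ((j + 2 : ℕ) : ℝ) ^ 2 + q * ((j + 2 : ℕ) : ℝ) + r) * (bernsteinPolynomial ℝ m j).eval x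
        = ∑ j ∈ range (m + 1), (p * j ^ 2 + (4 * p + q) * j + (4 * p + 2 * q + r))
          * (bernsteinPolynomial ℝ m j).eval x :=
    sum_congr rfl fun j _ => by push_cast; ring
  rw [sum_mul_bernP_add_two (fun k : ℕ => p * (k : ℝ) ^ 2 + q * k + r), hshift]
  simp only [sum_quadratic_mul_bernsteinPolynomial_eval]
  push_cast
  ring

/-- Linearity is only asked on functions continuous on `s`: for an integral operator such as `G`
it fails in general, the integral of a non-integrable function being `0`. -/
structure IsPositiveLinearOn (s : Set ℝ) (L : (ℝ → ℝ) → ℝ → ℝ) : Prop where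
  map_add {f g : ℝ → ℝ} : ContinuousOn f s → ContinuousOn g s →
    ∀ x ∈ s, L (fun t => f t + g t) x = L f x + L g x
  map_smul (c : ℝ) {f : ℝ → ℝ} : ContinuousOn f s → ∀ x ∈ s, L (fun t => c * f t) x = c * L f x
  mono {f g : ℝ → ℝ} : ContinuousOn f s → ContinuousOn g s → (∀ t ∈ s, f t ≤ g t) →
    ∀ x ∈ s, L f x ≤ L g x

lemma exists_abs_sub_le_add_mul_sq {s : Set ℝ} (hs : IsCompact s) {f : ℝ → ℝ}
    (hf : ContinuousOn f s) {η : ℝ} (hη : 0 < η) :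
    ∃ C, 0 ≤ C ∧ ∀ x ∈ s, ∀ t ∈ s, |f t - f x| ≤ η + C * (t - x) ^ 2 := by
  obtain ⟨M, hM0, hM⟩ := (hs.image_of_continuousOn hf).isBounded.exists_pos_norm_le
  obtain ⟨δ, hδ, hfδ⟩ :=
    Metric.uniformContinuousOn_iff.1 (hs.uniformContinuousOn_of_continuous hf) η hη
  refine ⟨2 * M / δ ^ 2, by positivity, fun x hx t ht => ?_⟩
  have hC : 0 ≤ 2 * M / δ ^ 2 * (t - x) ^ 2 := by positivity
  rcases lt_or_ge (dist t x) δ with hnear | hfar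
  · have := hfδ t ht x hx hnear
    rw [Real.dist_eq] at this
    linarith
  · have hδt : δ ^ 2 ≤ (t - x) ^ 2 := by
      rw [Real.dist_eq] at hfar
      nlinarith [sq_abs (t - x)]
    have hft := hM _ (Set.mem_image_of_mem f ht)
    have hfx := hM _ (Set.mem_image_of_mem f hx)
    rw [Real.norm_eq_abs] at hft hfx
    calc |f t - f x| ≤ |f t| + |f x| := abs_sub _ _
      _ ≤ 2 * M := by linarith
      _ ≤ 2 * M / δ ^ 2 * (t - x) ^ 2 := by
        rw [div_mul_eq_mul_div, le_div_iff₀ (by positivity)]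
        exact mul_le_mul_of_nonneg_left hδt (by positivity)
      _ ≤ η + 2 * M / δ ^ 2 * (t - x) ^ 2 := by linarith

namespace IsPositiveLinearOn

variable {s : Set ℝ} {L : (ℝ → ℝ) → ℝ → ℝ} {x : ℝ}

lemma map_sub_const (hL : IsPositiveLinearOn s L) {f : ℝ → ℝ} (hf : ContinuousOn f s) (c : ℝ)
    (hx : x ∈ s) : L (fun t => f t - c) x = L f x - c * L (fun _ => 1) x := by
  have h := hL.map_smul (-c) (continuousOn_const (c := (1 : ℝ))) x hx
  simp only [mul_one] at h
  simp only [sub_eq_add_neg, ← neg_mul, hL.map_add hf continuousOn_const x hx, h]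

lemma map_quadratic (hL : IsPositiveLinearOn s L) (a b c : ℝ) (hx : x ∈ s) :
    L (fun t => a + b * t + c * t ^ 2) x
      = a * L (fun _ => 1) x + b * L (fun t => t) x + c * L (fun t => t ^ 2) x := by
  have h0 := hL.map_smul a (continuousOn_const (c := (1 : ℝ))) x hx
  simp only [mul_one] at h0
  rw [hL.map_add (f := fun t => a + b * t) (by fun_prop) (by fun_prop) x hx,
    hL.map_add (f := fun _ => a) (by fun_prop) (by fun_prop) x hx, h0,
    hL.map_smul b (f := fun t => t) (continuousOn_id' s) x hx,
    hL.map_smul c (continuousOn_pow 2) x hx]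

lemma abs_le_of_abs_le (hL : IsPositiveLinearOn s L) {f g : ℝ → ℝ} (hf : ContinuousOn f s)
    (hg : ContinuousOn g s) (hfg : ∀ t ∈ s, |f t| ≤ g t) (hx : x ∈ s) : |L f x| ≤ L g x := by
  have hneg := hL.map_smul (-1) hg x hx
  refine abs_le.2 ⟨?_, hL.mono hf hg (fun t ht => (le_abs_self _).trans (hfg t ht)) x hx⟩
  have := hL.mono (f := fun t => -1 * g t) (continuousOn_const.mul hg) hf
    (fun t ht => by linarith [neg_abs_le (f t), hfg t ht]) x hx
  linarith

lemma abs_sub_mul_map_one_le (hL : IsPositiveLinearOn s L) {f : ℝ → ℝ} (hf : ContinuousOn f s)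
    {η C : ℝ} (hx : x ∈ s) (hfx : ∀ t ∈ s, |f t - f x| ≤ η + C * (t - x) ^ 2) :
    |L f x - f x * L (fun _ => 1) x| ≤ η * L (fun _ => 1) x
      + C * (L (fun t => t ^ 2) x - 2 * x * L (fun t => t) x + x ^ 2 * L (fun _ => 1) x) := by
  calc |L f x - f x * L (fun _ => 1) x| = |L (fun t => f t - f x) x| := by
        rw [hL.map_sub_const hf _ hx]
    _ ≤ L (fun t => (η + C * x ^ 2) + (-2 * C * x) * t + C * t ^ 2) x :=
        hL.abs_le_of_abs_le (hf.sub continuousOn_const) (by fun_prop)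
          (fun t ht => (hfx t ht).trans_eq (by ring)) hx
    _ = _ := by
        rw [hL.map_quadratic _ _ _ hx]
        ring

lemma abs_sub_le (hL : IsPositiveLinearOn s L) {f : ℝ → ℝ} (hf : ContinuousOn f s)
    {η C M R θ : ℝ} (hx : x ∈ s) (hC : 0 ≤ C) (hfx : ∀ t ∈ s, |f t - f x| ≤ η + C * (t - x) ^ 2)
    (hM : |f x| ≤ M) (hR : |x| ≤ R) (h0 : |L (fun _ => 1) x - 1| ≤ θ)
    (h1 : |L (fun t => t) x - x| ≤ θ) (h2 : |L (fun t => t ^ 2) x - x ^ 2| ≤ θ) :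
    |L f x - f x| ≤ η + θ * (η + C * (1 + R) ^ 2 + M) := by
  have hη : 0 ≤ η := by simpa using hfx x hx
  have hθ : 0 ≤ θ := (abs_nonneg _).trans h0
  have hcentral : L (fun t => t ^ 2) x - 2 * x * L (fun t => t) x + x ^ 2 * L (fun _ => 1) x
      ≤ θ * (1 + R) ^ 2 := by
    have hxe1 : -(R * θ) ≤ x * (L (fun t => t) x - x) := by
      refine neg_le.1 ((neg_le_abs _).trans ?_)
      rw [abs_mul]
      exact mul_le_mul hR h1 (abs_nonneg _) ((abs_nonneg _).trans hR)
    have hxe0 : x ^ 2 * (L (fun _ => 1) x - 1) ≤ R ^ 2 * θ :=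
      (mul_le_mul_of_nonneg_left (le_abs_self _) (sq_nonneg x)).trans
        (mul_le_mul (sq_le_sq' (abs_le.1 hR).1 (abs_le.1 hR).2) h0 (abs_nonneg _) (sq_nonneg R))
    linarith [(abs_le.1 h2).2]
  have hfx1 : |f x| * |L (fun _ => 1) x - 1| ≤ M * θ :=
    mul_le_mul hM h0 (abs_nonneg _) ((abs_nonneg _).trans hM)
  calc |L f x - f x| = |(L f x - f x * L (fun _ => 1) x) + f x * (L (fun _ => 1) x - 1)| := by
        ring_nf
    _ ≤ |L f x - f x * L (fun _ => 1) x| + |f x| * |L (fun _ => 1) x - 1| := by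
        rw [← abs_mul]
        exact abs_add_le _ _
    _ ≤ η * (1 + θ) + C * (θ * (1 + R) ^ 2) + M * θ := by
        linarith [hL.abs_sub_mul_map_one_le hf hx hfx, mul_le_mul_of_nonneg_left hcentral hC,
          mul_le_mul_of_nonneg_left (abs_le.1 h0).2 hη]
    _ = η + θ * (η + C * (1 + R) ^ 2 + M) := by ring

end IsPositiveLinearOn

theorem tendstoUniformlyOn_of_korovkin {ι : Type*} {l : Filter ι} {s : Set ℝ} (hs : IsCompact s)
    {L : ι → (ℝ → ℝ) → ℝ → ℝ} (hL : ∀ i, IsPositiveLinearOn s (L i))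
    (h0 : TendstoUniformlyOn (fun i => L i (fun _ => 1)) (fun _ => 1) l s)
    (h1 : TendstoUniformlyOn (fun i => L i (fun t => t)) (fun x => x) l s)
    (h2 : TendstoUniformlyOn (fun i => L i (fun t => t ^ 2)) (fun x => x ^ 2) l s)
    {f : ℝ → ℝ} (hf : ContinuousOn f s) : TendstoUniformlyOn (fun i => L i f) f l s := by
  rw [Metric.tendstoUniformlyOn_iff] at h0 h1 h2 ⊢
  intro ε hε
  obtain ⟨M, hM0, hM⟩ := (hs.image_of_continuousOn hf).isBounded.exists_pos_norm_le
  obtain ⟨R, hR0, hR⟩ := hs.isBounded.exists_pos_norm_le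
  obtain ⟨C, hC, hfC⟩ := exists_abs_sub_le_add_mul_sq hs hf (half_pos hε)
  set K := ε / 2 + C * (1 + R) ^ 2 + M
  have hK : 0 < K := by positivity
  have hθ : 0 < ε / (4 * K) := by positivity
  filter_upwards [h0 _ hθ, h1 _ hθ, h2 _ hθ] with i h0i h1i h2i x hx
  have habs {a b : ℝ} (h : dist a b < ε / (4 * K)) : |b - a| ≤ ε / (4 * K) := by
    rw [abs_sub_comm, ← Real.dist_eq]
    exact h.le
  have hfi := (hL i).abs_sub_le hf hx hC (hfC x hx) (hM _ (Set.mem_image_of_mem f hx)) (hR x hx)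
    (habs (h0i x hx)) (habs (h1i x hx)) (habs (h2i x hx))
  rw [Real.dist_eq, abs_sub_comm]
  calc |L i f x - f x| ≤ ε / 2 + ε / (4 * K) * K := hfi
    _ = 3 / 4 * ε := by field_simp; ring
    _ < ε := by linarith

lemma tendstoUniformlyOn_of_dist_le {ι α β : Type*} [PseudoMetricSpace β] {l : Filter ι}
    {s : Set α} {F : ι → α → β} {f : α → β} {u : ι → ℝ} (hu : Tendsto u l (𝓝 0))
    (hF : ∀ᶠ i in l, ∀ x ∈ s, dist (F i x) (f x) ≤ u i) : TendstoUniformlyOn F f l s := by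
  rw [Metric.tendstoUniformlyOn_iff]
  intro ε hε
  filter_upwards [hF, hu.eventually (gt_mem_nhds hε)] with i hi hui x hx
  rw [dist_comm]
  exact (hi x hx).trans_lt hui

section Durrmeyer

variable {n k : ℕ} {α ρ : ℝ}

lemma bernP_nonneg {x : ℝ} (hα : α ∈ Set.Icc (0:ℝ) 1) (hx : x ∈ Set.Icc (0:ℝ) 1) :
    0 ≤ bernP n k α x := by
  obtain ⟨hα0, hα1⟩ := hα
  obtain ⟨hx0, hx1⟩ := hx
  have : 0 ≤ 1 - α := sub_nonneg.2 hα1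
  have : 0 ≤ 1 - x := sub_nonneg.2 hx1
  unfold bernP
  split_ifs <;> positivity

lemma muD_eq_betaDensity : muD n k ρ = betaDensity (k * ρ) ((n - k) * ρ) := rfl

lemma muD_exponents_nonneg (hk : k ≤ n) (hρ : 0 ≤ ρ) : 0 ≤ (k : ℝ) * ρ ∧ 0 ≤ ((n : ℝ) - k) * ρ :=
  ⟨by positivity, mul_nonneg (sub_nonneg.2 (mod_cast hk)) hρ⟩

lemma intervalIntegrable_muD_mul (hk : k ≤ n) (hρ : 0 ≤ ρ) {f : ℝ → ℝ}
    (hf : ContinuousOn f (Set.Icc 0 1)) :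
    IntervalIntegrable (fun t => muD n k ρ t * f t) volume 0 1 := by
  obtain ⟨ha, hb⟩ := muD_exponents_nonneg hk hρ
  refine ContinuousOn.intervalIntegrable ?_
  rw [Set.uIcc_of_le zero_le_one]
  exact (continuousOn_betaDensity ha hb).mul hf

lemma isPositiveLinearOn_G (hα : α ∈ Set.Icc (0:ℝ) 1) (hρ : 0 ≤ ρ) :
    IsPositiveLinearOn (Set.Icc 0 1) (G n α ρ) where
  map_add hf hg x _ := by
    simp only [G, ← sum_add_distrib]
    refine sum_congr rfl fun k hk => ?_
    have hk : k ≤ n := Nat.lt_succ_iff.1 (mem_range.1 hk)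
    rw [← mul_add, ← intervalIntegral.integral_add (intervalIntegrable_muD_mul hk hρ hf)
      (intervalIntegrable_muD_mul hk hρ hg)]
    simp only [mul_add]
  map_smul c f _ x _ := by
    simp only [G, mul_sum, mul_left_comm _ c, intervalIntegral.integral_const_mul]
  mono hf hg hfg x hx := by
    refine sum_le_sum fun k hk => mul_le_mul_of_nonneg_left ?_ (bernP_nonneg hα hx)
    have hk : k ≤ n := Nat.lt_succ_iff.1 (mem_range.1 hk)
    obtain ⟨ha, hb⟩ := muD_exponents_nonneg hk hρ
    exact intervalIntegral.integral_mono_on zero_le_one (intervalIntegrable_muD_mul hk hρ hf)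
      (intervalIntegrable_muD_mul hk hρ hg) fun t ht =>
        mul_le_mul_of_nonneg_left (hfg t ht) (betaDensity_nonneg (by linarith) (by linarith) ht)

lemma G_eq_of_integral_muD_mul_eq {f : ℝ → ℝ} (hn : 2 ≤ n) {p q r : ℝ}
    (hf : ∀ k ≤ n, ∫ t in (0:ℝ)..1, muD n k ρ t * f t = p * k ^ 2 + q * k + r) (x : ℝ) :
    G n α ρ f x
      = p * (n * (n - 1) * x ^ 2 + n * x + 2 * (1 - α) * x * (1 - x)) + q * (n * x) + r := by
  rw [← sum_quadratic_mul_bernP hn]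
  refine sum_congr rfl fun k hk => ?_
  rw [hf k (Nat.lt_succ_iff.1 (mem_range.1 hk)), mul_comm]

lemma G_one (hn : 2 ≤ n) (hρ : 0 ≤ ρ) (x : ℝ) : G n α ρ (fun _ => 1) x = 1 := by
  rw [G_eq_of_integral_muD_mul_eq (p := 0) (q := 0) (r := 1) hn]
  · ring
  intro k hk
  obtain ⟨ha, hb⟩ := muD_exponents_nonneg hk hρ
  simp only [mul_one, muD_eq_betaDensity]
  rw [integral_betaDensity (by linarith) (by linarith)]
  ring

lemma G_id (hn : 2 ≤ n) (hρ : 0 ≤ ρ) (x : ℝ) :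
    G n α ρ (fun t => t) x = (n * ρ * x + 1) / (n * ρ + 2) := by
  have hD : (0:ℝ) < n * ρ + 2 := by positivity
  rw [G_eq_of_integral_muD_mul_eq (p := 0) (q := ρ / (n * ρ + 2)) (r := 1 / (n * ρ + 2)) hn]
  · field_simp
    ring
  intro k hk
  obtain ⟨ha, hb⟩ := muD_exponents_nonneg hk hρ
  rw [muD_eq_betaDensity, integral_betaDensity_mul_id (by linarith) (by linarith),
    show (k : ℝ) * ρ + (n - k) * ρ + 2 = n * ρ + 2 by ring]
  field_simp
  ring

lemma G_sq (hn : 2 ≤ n) (hρ : 0 ≤ ρ) (x : ℝ) :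
    G n α ρ (fun t => t ^ 2) x
      = (ρ ^ 2 * (n * (n - 1) * x ^ 2 + n * x + 2 * (1 - α) * x * (1 - x)) + 3 * ρ * (n * x) + 2)
        / ((n * ρ + 2) * (n * ρ + 3)) := by
  have hD : (0:ℝ) < (n * ρ + 2) * (n * ρ + 3) := by positivity
  rw [G_eq_of_integral_muD_mul_eq (p := ρ ^ 2 / ((n * ρ + 2) * (n * ρ + 3)))
    (q := 3 * ρ / ((n * ρ + 2) * (n * ρ + 3))) (r := 2 / ((n * ρ + 2) * (n * ρ + 3))) hn]
  · field_simp
  intro k hk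
  obtain ⟨ha, hb⟩ := muD_exponents_nonneg hk hρ
  rw [muD_eq_betaDensity, integral_betaDensity_mul_sq (by linarith) (by linarith),
    show (k : ℝ) * ρ + (n - k) * ρ = n * ρ by ring]
  field_simp
  ring

lemma abs_G_id_sub_le (hn : 2 ≤ n) (hρ : 0 < ρ) {x : ℝ} (hx : x ∈ Set.Icc (0:ℝ) 1) :
    |G n α ρ (fun t => t) x - x| ≤ ρ⁻¹ / n := by
  have hn' : (2:ℝ) ≤ n := by exact_mod_cast hn
  have hD : (0:ℝ) < n * ρ + 2 := by positivity
  rw [G_id hn hρ.le, show (n * ρ * x + 1) / (n * ρ + 2) - x = (1 - 2 * x) / (n * ρ + 2) by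
    field_simp; ring, abs_div, abs_of_pos hD]
  have habs : |1 - 2 * x| ≤ 1 := abs_le.2 ⟨by linarith [hx.2], by linarith [hx.1]⟩
  calc |1 - 2 * x| / (n * ρ + 2) ≤ 1 / (n * ρ) :=
        div_le_div₀ zero_le_one habs (by positivity) (by linarith)
    _ = ρ⁻¹ / n := by field_simp

lemma abs_G_sq_sub_le (hn : 2 ≤ n) (hα : α ∈ Set.Icc (0:ℝ) 1) (hρ : 0 < ρ) {x : ℝ}
    (hx : x ∈ Set.Icc (0:ℝ) 1) :
    |G n α ρ (fun t => t ^ 2) x - x ^ 2| ≤ (ρ ^ 2 + 2 * ρ + 4) / ρ ^ 2 / n := by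
  obtain ⟨hα0, hα1⟩ := hα
  obtain ⟨hx0, hx1⟩ := hx
  have hn' : (2:ℝ) ≤ n := by exact_mod_cast hn
  have hD : (0:ℝ) < (n * ρ + 2) * (n * ρ + 3) := by positivity
  set N := ρ ^ 2 * n * (x * (1 - x)) + 2 * ρ ^ 2 * (1 - α) * (x * (1 - x)) + ρ * n * x * (3 - 5 * x)
    + 2 - 6 * x ^ 2 with hN
  have hNbound : |N| ≤ n * (ρ ^ 2 + 2 * ρ + 4) := by
    have hxx : 0 ≤ x * (1 - x) := mul_nonneg hx0 (by linarith)
    have hxx' : x * (1 - x) ≤ 1 / 4 := by nlinarith [sq_nonneg (2 * x - 1)]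
    rw [abs_le]
    have hρn : 0 ≤ ρ * n := by positivity
    constructor
    · nlinarith [mul_nonneg (mul_nonneg (sq_nonneg ρ) (sub_nonneg.2 hα1)) hxx,
        mul_nonneg (mul_nonneg (sq_nonneg ρ) (Nat.cast_nonneg n)) hxx,
        mul_nonneg hρn (mul_nonneg (sub_nonneg.2 hx1) (by linarith : 0 ≤ 5 * x + 2))]
    · nlinarith [mul_nonneg (mul_nonneg (sq_nonneg ρ) (sub_nonneg.2 hα1)) hxx,
        mul_le_mul_of_nonneg_left hxx' (mul_nonneg (sq_nonneg ρ) (Nat.cast_nonneg n)),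
        mul_nonneg hρn (by nlinarith [sq_nonneg (x - 3 / 10)] : 0 ≤ 1 - x * (3 - 5 * x))]
  rw [G_sq hn hρ.le, show _ - x ^ 2 = N / ((n * ρ + 2) * (n * ρ + 3)) by rw [hN]; field_simp; ring,
    abs_div, abs_of_pos hD, div_div, div_le_div_iff₀ hD (by positivity)]
  have hK : 0 ≤ ρ ^ 2 + 2 * ρ + 4 := by positivity
  calc |N| * (ρ ^ 2 * n) ≤ n * (ρ ^ 2 + 2 * ρ + 4) * (ρ ^ 2 * n) :=
        mul_le_mul_of_nonneg_right hNbound (by positivity)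
    _ ≤ (ρ ^ 2 + 2 * ρ + 4) * ((n * ρ + 2) * (n * ρ + 3)) := by
        nlinarith [mul_nonneg hK (by positivity : (0:ℝ) ≤ 5 * n * ρ + 6)]

lemma tendstoUniformlyOn_G_one (hρ : 0 ≤ ρ) :
    TendstoUniformlyOn (fun n => G n α ρ (fun _ => 1)) (fun _ => 1) atTop (Set.Icc 0 1) :=
  tendstoUniformlyOn_of_dist_le tendsto_const_nhds <|
    (eventually_ge_atTop 2).mono fun _ hn x _ => by rw [G_one hn hρ, dist_self]

lemma tendstoUniformlyOn_G_id (hρ : 0 < ρ) :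
    TendstoUniformlyOn (fun n => G n α ρ (fun t => t)) (fun x => x) atTop (Set.Icc 0 1) :=
  tendstoUniformlyOn_of_dist_le (tendsto_const_div_atTop_nhds_zero_nat ρ⁻¹) <|
    (eventually_ge_atTop 2).mono fun _ hn _ hx =>
      (Real.dist_eq _ _).trans_le (abs_G_id_sub_le hn hρ hx)

lemma tendstoUniformlyOn_G_sq (hα : α ∈ Set.Icc (0:ℝ) 1) (hρ : 0 < ρ) :
    TendstoUniformlyOn (fun n => G n α ρ (fun t => t ^ 2)) (fun x => x ^ 2) atTop (Set.Icc 0 1) :=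
  tendstoUniformlyOn_of_dist_le (tendsto_const_div_atTop_nhds_zero_nat _) <|
    (eventually_ge_atTop 2).mono fun _ hn _ hx =>
      (Real.dist_eq _ _).trans_le (abs_G_sq_sub_le hn hα hρ hx)

end Durrmeyer

theorem G_tendstoUniformlyOn (f : ℝ → ℝ) (hf : ContinuousOn f (Set.Icc (0:ℝ) 1))
    (α ρ : ℝ) (hα : α ∈ Set.Icc (0:ℝ) 1) (hρ : 0 < ρ) :
    TendstoUniformlyOn (fun n : ℕ => fun x => G n α ρ f x) f
      Filter.atTop (Set.Icc (0:ℝ) 1) := by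
  exact tendstoUniformlyOn_of_korovkin isCompact_Icc (fun _ => isPositiveLinearOn_G hα hρ.le)
    (tendstoUniformlyOn_G_one hρ.le) (tendstoUniformlyOn_G_id hρ) (tendstoUniformlyOn_G_sq hα hρ) hf
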